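/- arXiv:1709.09309 — 2 statements merged into one kernel-verified Lean document; each statement's English description precedes it below -/
import Mathlib

section
/- Let N ≥ 1 and let σ be a permutation of Fin (N+1) (the node set {0,1,…,N} of the rendezvous graph). Suppose there is a potential function g : Fin (N+1) → ℝ such that g(i) < g(σ(i)) for every node i ≠ 0. Then σ is a single (N+1)-cycle through all nodes: for every node j there exists k with 0 ≤ k ≤ N such that σ^[k](0) = j. -/
/-- If a successor permutation `σ` on the node set `{0,1,…,N}` admits a potential
`g` that strictly increases along `σ` at every node except `0`, then `σ` is a
single `(N+1)`-cycle through all nodes: every node is reached from `0` by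
iterating `σ` at most `N` times. -/
theorem multi_target_no_subtours (N : ℕ) (hN : 1 ≤ N)
    (σ : Equiv.Perm (Fin (N + 1))) (g : Fin (N + 1) → ℝ)
    (hg : ∀ i : Fin (N + 1), i ≠ 0 → g i < g (σ i)) :
    ∀ j : Fin (N + 1), ∃ k : ℕ, k ≤ N ∧ (⇑σ)^[k] 0 = j := by
  intro j
  -- Step 1: any point on a cycle avoiding 0 gives a contradiction;
  -- hence every periodic orbit passes through 0.
  have hit : ∀ n : ℕ, 0 < n → ∀ x : Fin (N + 1), (⇑σ)^[n] x = x →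
      ∃ t < n, (⇑σ)^[t] x = 0 := by
    intro n hn x hx
    by_contra h
    push_neg at h
    have chain : ∀ t ≤ n, 0 < t → g x < g ((⇑σ)^[t] x) := by
      intro t ht ht0
      induction t with
      | zero => omega
      | succ s ih =>
        have hs0 : (⇑σ)^[s] x ≠ 0 := h s (by omega)
        have hstep : g ((⇑σ)^[s] x) < g ((⇑σ)^[s+1] x) := by
          have := hg ((⇑σ)^[s] x) hs0
          simpa [Function.iterate_succ_apply'] using this
        rcases Nat.eq_zero_or_pos s with hs | hs
        · subst hs; simpa using hstep
        · exact lt_trans (ih (by omega) hs) hstep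
    have := chain n le_rfl hn
    rw [hx] at this
    exact lt_irrefl _ this
  -- Step 2: every point is in the forward orbit of 0.
  have hord : 0 < orderOf σ := orderOf_pos σ
  have hperiod : (⇑σ)^[orderOf σ] j = j := by
    have : σ ^ orderOf σ = 1 := pow_orderOf_eq_one σ
    rw [Equiv.Perm.iterate_eq_pow, this]; rfl
  obtain ⟨t, htlt, ht⟩ := hit (orderOf σ) hord j hperiod
  have horb : ∃ k : ℕ, (⇑σ)^[k] 0 = j := by
    refine ⟨orderOf σ - t, ?_⟩
    rw [← ht, ← Function.iterate_add_apply]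
    rw [Nat.sub_add_cancel (le_of_lt htlt)]
    exact hperiod
  -- Step 3: take the minimal such k; it is at most N by pigeonhole.
  classical
  let k := Nat.find horb
  have hk : (⇑σ)^[k] 0 = j := Nat.find_spec horb
  refine ⟨k, ?_, hk⟩
  by_contra hkN
  push_neg at hkN
  -- k + 1 > N + 1 points among the first k+1 iterates, so two coincide
  have : ∃ a b : Fin (k + 1), a ≠ b ∧ (⇑σ)^[(a : ℕ)] 0 = (⇑σ)^[(b : ℕ)] 0 := by
    have hcard : Fintype.card (Fin (N + 1)) < Fintype.card (Fin (k + 1)) := by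
      simp; omega
    obtain ⟨a, b, hab, h⟩ :=
      Fintype.exists_ne_map_eq_of_card_lt (fun i : Fin (k + 1) => (⇑σ)^[(i : ℕ)] 0) hcard
    exact ⟨a, b, hab, h⟩
  obtain ⟨a, b, hab, heq⟩ := this
  -- wlog a < b
  wlog hlt : (a : ℕ) < (b : ℕ) generalizing a b
  · exact this b a (Ne.symm hab) heq.symm
      (by have : (a : ℕ) ≠ (b : ℕ) := fun h => hab (Fin.ext h); omega)
  -- then σ^[k - (b - a)] 0 = j, contradicting minimality
  have hb : (b : ℕ) ≤ k := by omega
  have key : (⇑σ)^[k - ((b : ℕ) - (a : ℕ))] 0 = j := by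
    have h1 : k - ((b : ℕ) - (a : ℕ)) = (k - (b : ℕ)) + (a : ℕ) := by omega
    have h2 : k = (k - (b : ℕ)) + (b : ℕ) := by omega
    rw [h1, Function.iterate_add_apply, heq, ← Function.iterate_add_apply, ← h2, hk]
  have hless : k - ((b : ℕ) - (a : ℕ)) < k := by omega
  exact Nat.find_min horb hless key
end

section
/- Let N ≥ 1, K ≥ 1. For each ordered pair (i,j) of nodes in Fin (N+1) and each arc index p ∈ Fin K, let t₁(i,j,p) ∈ ℝ be the departure time and τ(i,j,p) > 0 the transfer time of arc (i,j)^p, and let s > 0 be the service time. Let y : Fin (N+1) → Fin (N+1) → Fin K → ℕ be binary (values 0 or 1) with y i i p = 0 for all i, p, and satisfying: (a) for every j, ∑_{i}∑_{p} y i j p = 1; (b) for every i, ∑_{j}∑_{p} y i j p = 1; (c) for every i ≠ 0, whenever y j i p = 1 and y i l q = 1 one has t₁(j,i,p) + τ(j,i,p) + s ≤ t₁(i,l,q). Then the map σ sending each i to the unique j with y i j p = 1 for some p is a permutation of Fin (N+1) which is a single (N+1)-cycle; in particular, every node is of the form σ^[k](0) for some 0 ≤ k ≤ N. -/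
/-- Any feasible solution of the traveling salesman problem with multiple arcs
and arc time windows (P_ME) describes exactly one Hamiltonian tour with no
sub-tours: the successor map determined by the binary variables `y` is a
permutation of the node set `{0,1,…,N}` which is a single `(N+1)`-cycle. -/
theorem pme_feasible_is_hamiltonian (N K : ℕ) (hN : 1 ≤ N) (hK : 1 ≤ K)
    (t₁ τ : Fin (N + 1) → Fin (N + 1) → Fin K → ℝ) (s : ℝ)
    (hτ : ∀ i j p, 0 < τ i j p) (hs : 0 < s)
    (y : Fin (N + 1) → Fin (N + 1) → Fin K → ℕ)
    (hbin : ∀ i j p, y i j p = 0 ∨ y i j p = 1)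
    (hdiag : ∀ i p, y i i p = 0)
    (ha : ∀ j : Fin (N + 1), (∑ i : Fin (N + 1), ∑ p : Fin K, y i j p) = 1)
    (hb : ∀ i : Fin (N + 1), (∑ j : Fin (N + 1), ∑ p : Fin K, y i j p) = 1)
    (hc : ∀ i : Fin (N + 1), i ≠ 0 → ∀ j l p q,
      y j i p = 1 → y i l q = 1 → t₁ j i p + τ j i p + s ≤ t₁ i l q) :
    ∃ σ : Equiv.Perm (Fin (N + 1)),
      (∀ i j : Fin (N + 1), (∃ p, y i j p = 1) ↔ j = σ i) ∧
      ∀ j : Fin (N + 1), ∃ k : ℕ, k ≤ N ∧ (⇑σ)^[k] 0 = j := by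
  classical
  -- existence of a successor for each node
  have hex : ∀ i : Fin (N + 1), ∃ j, ∃ p, y i j p = 1 := by
    intro i
    by_contra h
    push_neg at h
    have hz : ∀ j p, y i j p = 0 := by
      intro j p
      rcases hbin i j p with h0 | h1
      · exact h0
      · exact absurd h1 (h j p)
    have : (∑ j : Fin (N + 1), ∑ p : Fin K, y i j p) = 0 := by
      simp [hz]
    rw [hb i] at this
    exact one_ne_zero this
  choose f p hfp using hex
  -- uniqueness of the successor
  have huniq : ∀ i j q, y i j q = 1 → j = f i := by
    intro i j q hq
    by_contra hne
    have h1 : 1 ≤ ∑ pp : Fin K, y i j pp :=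
      le_trans (le_of_eq hq.symm)
        (Finset.single_le_sum (fun _ _ => Nat.zero_le _) (Finset.mem_univ q))
    have h2 : 1 ≤ ∑ pp : Fin K, y i (f i) pp :=
      le_trans (le_of_eq (hfp i).symm)
        (Finset.single_le_sum (fun _ _ => Nat.zero_le _) (Finset.mem_univ (p i)))
    have hsub : (({j, f i} : Finset (Fin (N + 1))).sum
        (fun jj => ∑ pp : Fin K, y i jj pp)) ≤
        ∑ jj : Fin (N + 1), ∑ pp : Fin K, y i jj pp :=
      Finset.sum_le_sum_of_subset (Finset.subset_univ _)
    rw [Finset.sum_pair hne, hb i] at hsub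
    omega
  -- injectivity
  have hinj : Function.Injective f := by
    intro i i' hii
    by_contra hne
    have h1 : 1 ≤ ∑ pp : Fin K, y i (f i) pp :=
      le_trans (le_of_eq (hfp i).symm)
        (Finset.single_le_sum (fun _ _ => Nat.zero_le _) (Finset.mem_univ (p i)))
    have h2 : 1 ≤ ∑ pp : Fin K, y i' (f i) pp := by
      rw [hii]
      exact le_trans (le_of_eq (hfp i').symm)
        (Finset.single_le_sum (fun _ _ => Nat.zero_le _) (Finset.mem_univ (p i')))
    have hsub : (({i, i'} : Finset (Fin (N + 1))).sum
        (fun ii => ∑ pp : Fin K, y ii (f i) pp)) ≤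
        ∑ ii : Fin (N + 1), ∑ pp : Fin K, y ii (f i) pp :=
      Finset.sum_le_sum_of_subset (Finset.subset_univ _)
    rw [Finset.sum_pair hne, ha (f i)] at hsub
    omega
  have hbij : Function.Bijective f := Finite.injective_iff_bijective.mp hinj
  set σ : Equiv.Perm (Fin (N + 1)) := Equiv.ofBijective f hbij with hσ
  have hσf : ⇑σ = f := rfl
  refine ⟨σ, ?_, ?_⟩
  · intro i j
    constructor
    · rintro ⟨q, hq⟩
      exact (huniq i j q hq).trans (by rw [hσf])
    · rintro rfl
      exact ⟨p i, by rw [hσf]; exact hfp i⟩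
  -- the tour visits every node
  rw [hσf]
  -- the time stamp
  set G : Fin (N + 1) → ℝ := fun i => t₁ i (f i) (p i) with hG
  have hstep : ∀ i : Fin (N + 1), f i ≠ 0 → G i < G (f i) := by
    intro i hfi
    have h := hc (f i) hfi i (f (f i)) (p i) (p (f i)) (hfp i) (hfp (f i))
    have h1 := hτ i (f i) (p i)
    simp only [hG]
    linarith
  -- period of the permutation
  set m : ℕ := orderOf σ with hm
  have hmpos : 0 < m := orderOf_pos σ
  have hmid : ∀ x, f^[m] x = x := by
    intro x
    have h1 : (σ ^ m) x = x := by rw [pow_orderOf_eq_one σ]; rfl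
    calc f^[m] x = (⇑σ)^[m] x := rfl
      _ = (σ ^ m) x := by rw [Equiv.Perm.coe_pow]
      _ = x := h1
  have hmul : ∀ k x, f^[m * k] x = x := by
    intro k
    induction k with
    | zero => simp
    | succ k ih =>
      intro x
      have : m * (k + 1) = m * k + m := by ring
      rw [this, Function.iterate_add_apply]
      rw [hmid x, ih x]
  -- pigeonhole: a short return time to 0
  obtain ⟨a, b, hab, heq⟩ :
      ∃ a b : Fin (N + 2), a ≠ b ∧ f^[a.1] (0 : Fin (N + 1)) = f^[b.1] 0 := by
    have hcard : Fintype.card (Fin (N + 1)) < Fintype.card (Fin (N + 2)) := by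
      simp
    obtain ⟨a, b, hab, h⟩ :=
      Fintype.exists_ne_map_eq_of_card_lt
        (fun k : Fin (N + 2) => f^[k.1] (0 : Fin (N + 1))) hcard
    exact ⟨a, b, hab, h⟩
  -- WLOG a < b
  obtain ⟨u, v, huv, hvN, hret⟩ :
      ∃ u v : ℕ, u < v ∧ v ≤ N + 1 ∧ f^[u] (0 : Fin (N + 1)) = f^[v] 0 := by
    rcases lt_or_gt_of_ne (Fin.val_ne_of_ne hab) with h | h
    · exact ⟨a.1, b.1, h, Nat.lt_succ_iff.mp b.2, heq⟩
    · exact ⟨b.1, a.1, h, Nat.lt_succ_iff.mp a.2, heq.symm⟩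
  have hd' : f^[v - u] (0 : Fin (N + 1)) = 0 := by
    have hiter : f^[u] (f^[v - u] (0 : Fin (N + 1))) = f^[u] 0 := by
      rw [← Function.iterate_add_apply, show u + (v - u) = v by omega, hret]
    exact (hinj.iterate u) hiter
  set d : ℕ := v - u with hdd
  have hdpos : 0 < d := by omega
  have hdN : d ≤ N + 1 := by omega
  -- every iterate of 0 equals a short iterate
  have reduce : ∀ a : ℕ, ∃ r ≤ N, f^[r] (0 : Fin (N + 1)) = f^[a] 0 := by
    intro a
    induction a using Nat.strong_induction_on with
    | _ a ih =>
      rcases le_or_gt a N with h | h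
      · exact ⟨a, h, rfl⟩
      · have hda : d ≤ a := by omega
        have hsplit : f^[a] (0 : Fin (N + 1)) = f^[a - d] 0 := by
          conv_lhs => rw [show a = (a - d) + d by omega]
          rw [Function.iterate_add_apply, hd']
        obtain ⟨r, hr, hre⟩ := ih (a - d) (by omega)
        exact ⟨r, hr, hre.trans hsplit.symm⟩
  intro j
  by_contra hj
  push_neg at hj
  -- j's orbit avoids 0
  have havoid : ∀ t : ℕ, f^[t] j ≠ 0 := by
    intro t ht
    have hkey : f^[m * (t + 1) - t] (0 : Fin (N + 1)) = j := by
      have hle : t ≤ m * (t + 1) :=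
        le_trans (Nat.le_succ t) (Nat.le_mul_of_pos_left (t + 1) hmpos)
      rw [← ht, ← Function.iterate_add_apply,
        show m * (t + 1) - t + t = m * (t + 1) by omega]
      exact hmul (t + 1) j
    obtain ⟨r, hr, hre⟩ := reduce (m * (t + 1) - t)
    exact hj r hr (hre.trans hkey)
  -- strict increase of G along j's orbit
  have hchain : ∀ k : ℕ, 1 ≤ k → G j < G (f^[k] j) := by
    intro k
    induction k with
    | zero => omega
    | succ k ih =>
      intro _
      have hstep' : G (f^[k] j) < G (f^[k + 1] j) := by
        have h := hstep (f^[k] j) (by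
          have := havoid (k + 1)
          rwa [Function.iterate_succ_apply'] at this)
        rw [Function.iterate_succ_apply']
        exact h
      rcases Nat.eq_zero_or_pos k with hk0 | hk1
      · subst hk0; simpa using hstep'
      · exact lt_trans (ih hk1) hstep'
  have := hchain m hmpos
  rw [hmid j] at this
  exact lt_irrefl _ this
end
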